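/- Let S be a finite type and T : S → S a function. Then (S, T) admits a quantum embedding if and only if T is injective. -/

import Mathlib

noncomputable section

/-- The tensor product of `ψ : H_S` and `η : H_L`, identified with a vector in
`EuclideanSpace ℂ (S × L)`. -/
def tensor {S L : Type*} [Fintype S] [Fintype L]
    (ψ : EuclideanSpace ℂ S) (η : EuclideanSpace ℂ L) :
    EuclideanSpace ℂ (S × L) :=
  WithLp.toLp 2 (fun p => ψ p.1 * η p.2)

/-- The standard basis vector at `s` (indicator function of `s`). -/
def e {S : Type*} [Fintype S] [DecidableEq S] (s : S) : EuclideanSpace ℂ S :=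
  EuclideanSpace.single s 1

/-- The linearization of `T : S → S`: the unique linear map with `𝒯 e_s = e_{T s}`. -/
def linearize {S : Type*} [Fintype S] [DecidableEq S] (T : S → S) :
    EuclideanSpace ℂ S →ₗ[ℂ] EuclideanSpace ℂ S where
  toFun ψ := ∑ s : S, ψ s • e (T s)
  map_add' ψ φ := by
    simp [PiLp.add_apply, add_smul, Finset.sum_add_distrib]
  map_smul' c ψ := by
    simp [PiLp.smul_apply, smul_smul, Finset.smul_sum]

lemma linearize_e {S : Type*} [Fintype S] [DecidableEq S] (T : S → S) (a : S) :
    linearize T (e a) = e (T a) := by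
  show (∑ s : S, (e a) s • e (T s)) = e (T a)
  rw [Finset.sum_eq_single a]
  · simp [e]
  · intro b _ hb
    simp [e, EuclideanSpace.single_apply, hb]
  · simp

lemma linearize_apply_of_injective {S : Type*} [Fintype S] [DecidableEq S] {T : S → S}
    (hT : Function.Bijective T) (ψ : EuclideanSpace ℂ S) (s : S) :
    linearize T ψ s = ψ ((Equiv.ofBijective T hT).symm s) := by
  show (∑ s' : S, ψ s' • e (T s')) s = _
  rw [WithLp.ofLp_sum, Finset.sum_apply]
  rw [Finset.sum_eq_single ((Equiv.ofBijective T hT).symm s)]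
  · have : T ((Equiv.ofBijective T hT).symm s) = s :=
      (Equiv.ofBijective T hT).apply_symm_apply s
    simp [e, EuclideanSpace.single_apply, this]
  · intro b _ hb
    have : T b ≠ s := by
      intro h
      apply hb
      have := (Equiv.ofBijective T hT).symm_apply_apply b
      rw [show (Equiv.ofBijective T hT) b = T b from rfl, h] at this
      exact this.symm
    simp [e, EuclideanSpace.single_apply, Ne.symm this]
  · simp

/-- `(S, T)` admits a quantum embedding if and only if `T` is injective. -/
theorem quantum_embedding_iff_injective {S : Type} [Fintype S] [DecidableEq S]
    (T : S → S) :
    (∃ (L : Type) (_ : Fintype L)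
        (U : EuclideanSpace ℂ (S × L) ≃ₗᵢ[ℂ] EuclideanSpace ℂ (S × L))
        (η₀ : EuclideanSpace ℂ L),
      ‖η₀‖ = 1 ∧ ∀ ψ : EuclideanSpace ℂ S, ∃ η' : EuclideanSpace ℂ L,
        ‖η'‖ = 1 ∧ U (tensor ψ η₀) = tensor (linearize T ψ) η') ↔
    Function.Injective T := by
  constructor
  · rintro ⟨L, _, U, η₀, hη₀, h⟩ a b hab
    by_contra hne
    obtain ⟨η', hη', heq⟩ := h (e a - e b)
    have h0 : linearize T (e a - e b) = 0 := by
      rw [map_sub, linearize_e, linearize_e, hab, sub_self]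
    rw [h0] at heq
    have hz : tensor (0 : EuclideanSpace ℂ S) η' = 0 := by
      ext p
      show (0 : EuclideanSpace ℂ S) p.1 * η' p.2 = 0
      simp
    rw [hz] at heq
    have ht0 : tensor (e a - e b) η₀ = 0 := U.injective (heq.trans (map_zero U).symm)
    have hη0ne : η₀ ≠ 0 := by
      intro h
      rw [h, norm_zero] at hη₀
      exact one_ne_zero hη₀.symm
    obtain ⟨l, hl⟩ : ∃ l, η₀ l ≠ 0 := by
      by_contra hc
      push_neg at hc
      exact hη0ne (PiLp.ext hc)
    have : tensor (e a - e b) η₀ (a, l) = (0 : EuclideanSpace ℂ (S × L)) (a, l) := by rw [ht0]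
    have hval : tensor (e a - e b) η₀ (a, l) = η₀ l := by
      show ((e a - e b) a) * η₀ l = η₀ l
      have : (e a - e b) a = 1 := by
        simp [e, EuclideanSpace.single_apply, PiLp.sub_apply, hne]
      rw [this, one_mul]
    rw [hval] at this
    exact hl this
  · intro hT
    have hbij : Function.Bijective T := Finite.injective_iff_bijective.mp hT
    set σ : S ≃ S := Equiv.ofBijective T hbij with hσ
    refine ⟨Unit, inferInstance,
      LinearIsometryEquiv.piLpCongrLeft 2 ℂ ℂ (σ.prodCongr (Equiv.refl Unit)),
      e (), by simp [e, EuclideanSpace.norm_single], ?_⟩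
    intro ψ
    refine ⟨e (), by simp [e, EuclideanSpace.norm_single], ?_⟩
    ext p
    rw [LinearIsometryEquiv.piLpCongrLeft_apply]
    show tensor ψ (e ()) ((σ.prodCongr (Equiv.refl Unit)).symm p) = _
    show ψ (σ.symm p.1) * (e ()) p.2 = linearize T ψ p.1 * (e ()) p.2
    rw [linearize_apply_of_injective hbij]
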